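/- arXiv:2312.16714 — 3 statements merged into one kernel-verified Lean document; each statement's English description precedes it below -/
import Mathlib

section
/- The hereditary closure relation ♯ of a pPES is irreflexive. -/
variable {E : Type*}

/-- A set is conflict-free if no two of its elements are in conflict. -/
def ConflictFree (conf : E → E → Prop) (X : Set E) : Prop :=
  ∀ e ∈ X, ∀ e' ∈ X, ¬ conf e e'

/-- The causes of an event: ⌊e⌋ = {e' | e' ≤ e}. -/
def causes (lt : E → E → Prop) (e : E) : Set E :=
  {e' | e' = e ∨ lt e' e}

/-- A pre-prime event structure on the events `E`. -/
structure IsPPES (lt conf : E → E → Prop) : Prop where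
  countable : Countable E
  conf_irrefl : Irreflexive conf
  conf_symm : Symmetric conf
  lt_irrefl : Irreflexive lt
  lt_trans : Transitive lt
  causes_finite : ∀ e, (causes lt e).Finite
  causes_cf : ∀ e, ConflictFree conf (causes lt e)

/-- A configuration: conflict-free and downward closed. -/
def Config (lt conf : E → E → Prop) (X : Set E) : Prop :=
  ConflictFree conf X ∧ ∀ e ∈ X, ∀ e', lt e' e → e' ∈ X

/-- `A` is enabled at `X`. -/
def Enabled (lt conf : E → E → Prop) (X A : Set E) : Prop :=
  A ∩ X = ∅ ∧ ConflictFree conf (X ∪ A) ∧ ∀ e ∈ A, ∀ e', lt e' e → e' ∈ X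

/-- The hereditary closure ♯ of the conflict relation. -/
inductive HC (lt conf : E → E → Prop) : E → E → Prop
  | base {e e'} : conf e e' → HC lt conf e e'
  | hered {e e' e''} : HC lt conf e e' → lt e' e'' → HC lt conf e e''
  | symm {e e'} : HC lt conf e e' → HC lt conf e' e

theorem stmt8 (lt conf : E → E → Prop) (h : IsPPES lt conf) :
    Irreflexive (HC lt conf) := by
  have key : ∀ e e', HC lt conf e e' →
      ∃ a ∈ causes lt e, ∃ b ∈ causes lt e', conf a b := by
    intro e e' hc
    induction hc with
    | @base x y hxy => exact ⟨x, Or.inl rfl, y, Or.inl rfl, hxy⟩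
    | @hered x y z _ hlt ih =>
        obtain ⟨a, ha, b, hb, hab⟩ := ih
        refine ⟨a, ha, b, ?_, hab⟩
        rcases hb with rfl | hb
        · exact Or.inr hlt
        · exact Or.inr (h.lt_trans hb hlt)
    | @symm x y _ ih =>
        obtain ⟨a, ha, b, hb, hab⟩ := ih
        exact ⟨b, hb, a, ha, h.conf_symm hab⟩
  intro e hc
  obtain ⟨a, ha, b, hb, hab⟩ := key e e hc
  exact h.causes_cf e a ha b hb hab
end

section
/- For a pPES P = (E, <, #), the hereditary closure hc(P) = (E, <, ♯) is a prime event structure: ♯ is irreflexive, symmetric, hereditary with respect to <, every ⌊e⌋ is finite and ♯-conflict-free, and events are not in ♯-conflict with their causes. -/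
variable {E : Type*}

lemma causes_trans {lt : E → E → Prop} (htr : Transitive lt) {a e1 e : E}
    (ha : a ∈ causes lt e1) (he1 : e1 ∈ causes lt e) : a ∈ causes lt e := by
  rcases ha with rfl | ha <;> rcases he1 with rfl | he1
  · exact Or.inl rfl
  · exact Or.inr he1
  · exact Or.inr ha
  · exact Or.inr (htr ha he1)

lemma hc_char {lt conf : E → E → Prop} (h : IsPPES lt conf) {e e' : E}
    (hc : HC lt conf e e') :
    ∃ a ∈ causes lt e, ∃ b ∈ causes lt e', conf a b := by
  induction hc with
  | base hcf => exact ⟨_, Or.inl rfl, _, Or.inl rfl, hcf⟩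
  | hered _ hlt ih =>
      obtain ⟨a, ha, b, hb, hab⟩ := ih
      exact ⟨a, ha, b, causes_trans h.lt_trans hb (Or.inr hlt), hab⟩
  | symm _ ih =>
      obtain ⟨a, ha, b, hb, hab⟩ := ih
      exact ⟨b, hb, a, ha, h.conf_symm hab⟩

theorem stmt11 (lt conf : E → E → Prop) (h : IsPPES lt conf) :
    Irreflexive (HC lt conf) ∧ Symmetric (HC lt conf) ∧
    (∀ e e' e'' : E, HC lt conf e e' → lt e' e'' → HC lt conf e e'') ∧
    (∀ e : E, (causes lt e).Finite ∧ ConflictFree (HC lt conf) (causes lt e)) ∧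
    (∀ e e' : E, lt e' e → ¬ HC lt conf e e') := by
  refine ⟨?_, fun _ _ => HC.symm, fun _ _ _ => HC.hered, ?_, ?_⟩
  · intro e hce
    obtain ⟨a, ha, b, hb, hab⟩ := hc_char h hce
    exact h.causes_cf e a ha b hb hab
  · intro e
    refine ⟨h.causes_finite e, ?_⟩
    intro e1 h1 e2 h2 hce
    obtain ⟨a, ha, b, hb, hab⟩ := hc_char h hce
    exact h.causes_cf e a (causes_trans h.lt_trans ha h1)
      b (causes_trans h.lt_trans hb h2) hab
  · intro e e' hlt hce
    obtain ⟨a, ha, b, hb, hab⟩ := hc_char h hce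
    exact h.causes_cf e a ha b (causes_trans h.lt_trans hb (Or.inr hlt)) hab
end

section
/- The configurations of a pPES P coincide with the configurations of its hereditary closure hc(P): X is conflict-free and downward closed for (E, <, #) if and only if it is so for (E, <, ♯). -/
variable {E : Type*}

theorem stmt13 (lt conf : E → E → Prop) (h : IsPPES lt conf) (X : Set E) :
    Config lt conf X ↔ Config lt (HC lt conf) X := by
  constructor
  · rintro ⟨cf, dc⟩
    refine ⟨?_, dc⟩
    intro e he e' he' hhc
    induction hhc with
    | base hb => exact cf _ he _ he' hb
    | hered h1 h2 ih => exact ih he (dc _ he' _ h2)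
    | symm h1 ih => exact ih he' he
  · rintro ⟨cf, dc⟩
    exact ⟨fun e he e' he' hb => cf e he e' he' (HC.base hb), dc⟩
end
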